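/- arXiv:2404.15769 — 7 statements merged into one kernel-verified Lean document; each statement's English description precedes it below -/
import Mathlib

section
/- Let H be a set with a distinguished element 0 and a map Σ : H^ℕ → H satisfying: (A1) if x = (x_i) with x_i = 0 for all i ≠ 0 then Σ(x) = x_0; and (A2) for every doubly indexed family (x_{i,j}) and every bijection π : ℕ × ℕ → ℕ, Σ_i Σ_j x_{i,j} = Σ_k x_{π⁻¹(k)}. Then the binary operation a + b := Σ(x) where x_0 = a, x_1 = b, and x_i = 0 for i ≥ 2, makes H a commutative monoid with identity 0. -/
/-- An ℵ₀-monoid: a set with 0 and a countable summation map satisfying (A1) and (A2). -/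
structure AlephMonoid (H : Type*) where
  zero : H
  sum : (ℕ → H) → H
  a1 : ∀ x : ℕ → H, (∀ i, i ≠ 0 → x i = zero) → sum x = x 0
  a2 : ∀ (x : ℕ × ℕ → H) (π : ℕ × ℕ ≃ ℕ),
    sum (fun i => sum (fun j => x (i, j))) = sum (fun k => x (π.symm k))

namespace AlephMonoid

variable {H : Type*}

/-- The induced binary addition. -/
def add (M : AlephMonoid H) (a b : H) : H :=
  M.sum (fun i => if i = 0 then a else if i = 1 then b else M.zero)

/-- ℵ₀·a : the countable sum of copies of `a`. -/
def infMul (M : AlephMonoid H) (a : H) : H := M.sum (fun _ => a)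

/-- n·a : finite multiples. -/
def nsmul (M : AlephMonoid H) : ℕ → H → H
  | 0, _ => M.zero
  | n + 1, a => M.add a (M.nsmul n a)

/-- `y ∈ add(x)` : `y` is a direct summand of a finite multiple of `x`. -/
def inAdd (M : AlephMonoid H) (x y : H) : Prop :=
  ∃ z : H, ∃ n : ℕ, 1 ≤ n ∧ M.add y z = M.nsmul n x

/-- Multiplication by a cardinal α with 0 ≤ α ≤ ℵ₀ (`none` stands for ℵ₀). -/
def cmul (M : AlephMonoid H) : Option ℕ → H → H
  | some n, a => M.nsmul n a
  | none, a => M.infMul a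

/-- The finite sum `Σ_{i=a}^{b} f i`, expressed via the countable sum of a
family supported on the interval `[a, b]`. -/
def intervalSum (M : AlephMonoid H) (f : ℕ → H) (a b : ℕ) : H :=
  M.sum (fun i => if a ≤ i ∧ i ≤ b then f i else M.zero)

end AlephMonoid

/-! Axiom (A2) makes `Σ` invariant under permutations of ℕ and of ℕ × ℕ, which gives
commutativity at once. Writing `(a + b) + c` and `(a + c) + b` as iterated double sums, the two
double families differ by the transposition of `(0, 1)` and `(1, 0)`, so `(a + b) + c = (a + c) + b`;
associativity follows from this and commutativity. -/

namespace AlephMonoid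

variable {H : Type*} (M : AlephMonoid H)

def pair (a b : H) : ℕ → H := fun i => if i = 0 then a else if i = 1 then b else M.zero

theorem add_eq_sum_pair (a b : H) : M.add a b = M.sum (M.pair a b) := rfl

theorem sum_comp_equiv (z : ℕ → H) (σ : ℕ ≃ ℕ) : M.sum (fun k => z (σ k)) = M.sum z := by
  have h := M.a2 (fun p => z (Nat.pairEquiv p)) Nat.pairEquiv
  have hσ := M.a2 (fun p => z (Nat.pairEquiv p)) (Nat.pairEquiv.trans σ.symm)
  simp only [Equiv.apply_symm_apply, Equiv.symm_trans_apply, Equiv.symm_symm] at h hσ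
  exact hσ.symm.trans h

theorem sum_sum_comp_equiv (x : ℕ × ℕ → H) (τ : ℕ × ℕ ≃ ℕ × ℕ) :
    M.sum (fun i => M.sum fun j => x (τ (i, j))) = M.sum (fun i => M.sum fun j => x (i, j)) := by
  rw [M.a2 (fun p => x (τ p)) Nat.pairEquiv, M.a2 x (τ.symm.trans Nat.pairEquiv)]
  simp only [Equiv.symm_trans_apply, Equiv.symm_symm]

theorem sum_const_zero : M.sum (fun _ => M.zero) = M.zero :=
  M.a1 _ fun _ _ => rfl

theorem add_zero (a : H) : M.add a M.zero = a :=
  M.a1 _ fun i hi => by simp [hi]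

theorem sum_pair_apply (f g : ℕ → H) (i : ℕ) :
    M.sum (fun j => M.pair (f j) (g j) i) = M.pair (M.sum f) (M.sum g) i := by
  rcases i with _ | _ | i <;> simp [pair, sum_const_zero]

theorem add_comm (a b : H) : M.add a b = M.add b a := by
  rw [add_eq_sum_pair, M.add_eq_sum_pair b, ← M.sum_comp_equiv (M.pair b a) (Equiv.swap 0 1)]
  congr 1
  funext k
  rcases k with _ | _ | k <;> simp [pair, Equiv.swap_apply_of_ne_of_ne]

theorem add_add_eq_sum_sum (a b c d : H) :
    M.add (M.add a b) (M.add c d) =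
      M.sum fun i => M.sum fun j => M.pair (M.pair a b j) (M.pair c d j) i := by
  simp only [sum_pair_apply, add_eq_sum_pair]

theorem add_right_comm (a b c : H) : M.add (M.add a b) c = M.add (M.add a c) b := by
  have key : M.add (M.add a b) (M.add c M.zero) = M.add (M.add a c) (M.add b M.zero) := by
    rw [add_add_eq_sum_sum, add_add_eq_sum_sum]
    refine (M.sum_sum_comp_equiv (fun p => M.pair (M.pair a b p.2) (M.pair c M.zero p.2) p.1)
      (Equiv.swap (0, 1) (1, 0))).symm.trans ?_
    congr 1; funext i; congr 1; funext j
    rcases i with _ | _ | i <;> rcases j with _ | _ | j <;>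
      simp [pair, Equiv.swap_apply_of_ne_of_ne]
  rwa [M.add_zero, M.add_zero] at key

theorem add_assoc (a b c : H) : M.add (M.add a b) c = M.add a (M.add b c) := by
  rw [M.add_comm a (M.add b c), M.add_right_comm b c a, M.add_comm b a]

end AlephMonoid

/-- the induced binary addition makes H a commutative monoid with identity 0. -/
theorem alephMonoid_add_commMonoid {H : Type*} (M : AlephMonoid H) :
    (∀ a b : H, M.add a b = M.add b a) ∧
    (∀ a b c : H, M.add (M.add a b) c = M.add a (M.add b c)) ∧
    (∀ a : H, M.add a M.zero = a) ∧
    (∀ a : H, M.add M.zero a = a) :=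
  ⟨M.add_comm, M.add_assoc, M.add_zero, fun a => (M.add_comm _ a).trans (M.add_zero a)⟩
end

section
/- Let M be a commutative reduced monoid that is separative, i.e., for all a, b, c ∈ M, if a + c = b + c and c ∈ add(a) ∩ add(b), then a = b. If n > m ≥ 0 and k, k' ≥ 0 are integers and x, y ∈ M satisfy n·x + k·y = m·x + k'·y, then (n − m + 1)·x + k·y = x + k'·y. -/
/-! Both sides have the form `x + z`, and `m • x` is a summand of `(m + 1) • (x + z)` for every `z`,
so separativity cancels `m • x` from
`(n - m + 1) • x + k • y + m • x = x + (n • x + k • y) = x + (m • x + k' • y)`. -/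

/-- add(a) = the set of summands of positive finite multiples of a. -/
def addCl {M : Type*} [AddCommMonoid M] (a : M) : Set M :=
  {u | ∃ z : M, ∃ t : ℕ, 1 ≤ t ∧ u + z = t • a}

theorem nsmul_mem_addCl_add {M : Type*} [AddCommMonoid M] (x z : M) (m : ℕ) :
    m • x ∈ addCl (x + z) :=
  ⟨x + (m + 1) • z, m + 1, le_add_self, by rw [nsmul_add, succ_nsmul x, add_assoc]⟩

theorem separative_shift_general {M : Type*} [AddCommMonoid M]
    (hsep : ∀ a b c : M, a + c = b + c → c ∈ addCl a → c ∈ addCl b → a = b)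
    (x y : M) (n m k k' : ℕ) (hnm : m < n)
    (h : n • x + k • y = m • x + k' • y) :
    (n - m + 1) • x + k • y = x + k' • y := by
  have hlhs : (n - m + 1) • x + k • y = x + ((n - m) • x + k • y) := by
    rw [succ_nsmul', add_assoc]
  have hcancel : x + ((n - m) • x + k • y) + m • x = x + k' • y + m • x := by
    calc x + ((n - m) • x + k • y) + m • x = x + (n • x + k • y) := by
          rw [add_assoc, add_right_comm, ← add_nsmul, Nat.sub_add_cancel hnm.le]
      _ = x + k' • y + m • x := by rw [h, add_assoc, add_comm (m • x)]
  rw [hlhs]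
  exact hsep _ _ _ hcancel (nsmul_mem_addCl_add _ _ m) (nsmul_mem_addCl_add _ _ m)

/-- in a reduced separative commutative monoid, if n > m and
n•x + k•y = m•x + k'•y, then (n - m + 1)•x + k•y = x + k'•y. -/
theorem separative_shift {M : Type*} [AddCommMonoid M]
    (hred : ∀ a b : M, a + b = 0 → a = 0 ∧ b = 0)
    (hsep : ∀ a b c : M, a + c = b + c → c ∈ addCl a → c ∈ addCl b → a = b)
    (x y : M) (n m k k' : ℕ) (hnm : m < n)
    (h : n • x + k • y = m • x + k' • y) :
    (n - m + 1) • x + k • y = x + k' • y :=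
  separative_shift_general hsep x y n m k k' hnm h
end

section
/- Let M be a commutative refinement monoid generated by two elements x and y such that x ∉ add(y) and y ∉ add(x) (i.e., no positive multiple of one element has the other as a summand). If n₁·x + m₁·y = n₂·x + m₂·y with n₁, n₂, m₁, m₂ nonzero positive integers, then n₁·x = n₂·x and m₁·y = m₂·y. -/
section

variable {M : Type*} [AddCommMonoid M]

theorem mem_addCl_of_add_mem {u v a : M} (h : u + v ∈ addCl a) : u ∈ addCl a := by
  obtain ⟨z, t, ht, hz⟩ := h
  exact ⟨v + z, t, ht, by rw [← add_assoc, hz]⟩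

theorem mem_addCl_of_nsmul_add_mem {x w a : M} {k : ℕ} (hk : k ≠ 0)
    (h : k • x + w ∈ addCl a) : x ∈ addCl a := by
  obtain ⟨k, rfl⟩ := Nat.exists_eq_succ_of_ne_zero hk
  rw [succ_nsmul', add_assoc] at h
  exact mem_addCl_of_add_mem h

theorem nsmul_add_nsmul_eq_zero_of_mem_addCl {x y : M} (hx : x ∉ addCl y) (hy : y ∉ addCl x)
    (a b : ℕ) (hax : a • x + b • y ∈ addCl x) (hay : a • x + b • y ∈ addCl y) :
    a • x + b • y = 0 := by
  have ha : a = 0 := by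
    by_contra ha
    exact hx (mem_addCl_of_nsmul_add_mem ha hay)
  have hb : b = 0 := by
    by_contra hb
    rw [add_comm] at hax
    exact hy (mem_addCl_of_nsmul_add_mem hb hax)
  simp [ha, hb]

end

/-- in a refinement monoid generated by x, y with x ∉ add(y) and
y ∉ add(x), the relation n₁•x + m₁•y = n₂•x + m₂•y (all coefficients positive)
forces n₁•x = n₂•x and m₁•y = m₂•y. -/
theorem refinement_type1_split {M : Type*} [AddCommMonoid M]
    (href : ∀ a b c d : M, a + b = c + d →
      ∃ e f g h : M, a = e + f ∧ b = g + h ∧ c = e + g ∧ d = f + h)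
    (x y : M) (hgen : ∀ m : M, ∃ a b : ℕ, m = a • x + b • y)
    (hx : x ∉ addCl y) (hy : y ∉ addCl x)
    (n₁ n₂ m₁ m₂ : ℕ) (hn₁ : 1 ≤ n₁) (hn₂ : 1 ≤ n₂) (hm₁ : 1 ≤ m₁) (hm₂ : 1 ≤ m₂)
    (heq : n₁ • x + m₁ • y = n₂ • x + m₂ • y) :
    n₁ • x = n₂ • x ∧ m₁ • y = m₂ • y := by
  have common_summand_eq_zero : ∀ u, u ∈ addCl x → u ∈ addCl y → u = 0 := by
    intro u hux huy
    obtain ⟨a, b, rfl⟩ := hgen u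
    exact nsmul_add_nsmul_eq_zero_of_mem_addCl hx hy a b hux huy
  obtain ⟨e, f, g, h, h₁, h₂, h₃, h₄⟩ := href _ _ _ _ heq
  have hf : f = 0 :=
    common_summand_eq_zero f ⟨e, n₁, hn₁, by rw [h₁, add_comm]⟩ ⟨h, m₂, hm₂, h₄.symm⟩
  have hg : g = 0 :=
    common_summand_eq_zero g ⟨e, n₂, hn₂, by rw [h₃, add_comm]⟩ ⟨h, m₁, hm₁, h₂.symm⟩
  subst hf hg
  simp only [add_zero, zero_add] at h₁ h₂ h₃ h₄
  exact ⟨h₁.trans h₃.symm, h₂.trans h₄.symm⟩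
end

section
/- Let M be the commutative monoid presented by generators a_{v_0}, a_{v_1}, a_{v_2}, … and relations a_{v_i} = a_{v_0} + a_{v_{i+1}} for all i ≥ 0. Then M is isomorphic as a monoid to ℤ ⊔ {z}, the monoid whose underlying set is the integers together with one extra element z, where addition of integers is the usual one, z + z = z, and z + n = n + z = n for every integer n. The isomorphism sends a_{v_i} to i − 1. -/
/-- The defining relations: a_{v_i} = a_{v_0} + a_{v_{i+1}} for all i ≥ 0,
on the free commutative monoid ℕ →₀ ℕ on generators a_{v_i} := single i 1. -/
def roseRel : (ℕ →₀ ℕ) → (ℕ →₀ ℕ) → Prop := fun p q =>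
  ∃ i : ℕ, p = Finsupp.single i 1 ∧ q = Finsupp.single 0 1 + Finsupp.single (i + 1) 1

/-- The presented monoid M. -/
noncomputable def roseCon : AddCon (ℕ →₀ ℕ) := addConGen roseRel

namespace RoseAux

noncomputable def A (i : ℕ) : roseCon.Quotient :=
  ((Finsupp.single i 1 : ℕ →₀ ℕ) : roseCon.Quotient)

noncomputable def φ : (ℕ →₀ ℕ) →+ WithZero ℤ :=
  Finsupp.liftAddHom fun i => multiplesHom (WithZero ℤ) (((i : ℤ) - 1 : ℤ) : WithZero ℤ)

lemma φ_single (i n : ℕ) :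
    φ (Finsupp.single i n) = n • ((((i : ℤ) - 1 : ℤ) : WithZero ℤ)) := by
  simp [φ]

lemma hle : roseCon ≤ AddCon.ker φ := by
  rw [roseCon]
  refine AddCon.addConGen_le.2 fun p q h => ?_
  obtain ⟨i, rfl, rfl⟩ := h
  show φ _ = φ _
  rw [map_add, φ_single, φ_single, φ_single, one_smul, one_smul, one_smul, ← WithZero.coe_add]
  congr 1
  push_cast
  ring

noncomputable def ψ : roseCon.Quotient →+ WithZero ℤ := roseCon.lift φ hle

lemma ψ_A (i : ℕ) : ψ (A i) = (((i : ℤ) - 1 : ℤ) : WithZero ℤ) := by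
  rw [A, ψ, AddCon.lift_coe, φ_single, one_smul]

lemma L1 (i : ℕ) : A 0 + A (i + 1) = A i := by
  symm
  rw [A, A, A, ← AddCon.coe_add]
  exact roseCon.eq.mpr (AddConGen.Rel.of _ _ ⟨i, rfl, rfl⟩)

lemma L2 (k j : ℕ) : A (j + 1) + A k = A (j + k) := by
  induction k generalizing j with
  | zero => rw [add_comm, L1]; rfl
  | succ k ih =>
      rw [← L1 (j + 1), add_comm (A 0), add_assoc, L1 k, ih (j + 1)]
      congr 1
      omega

lemma L3 (k i : ℕ) : A (i + k) + k • A 0 = A i := by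
  induction k with
  | zero => rw [zero_nsmul, add_zero]; rfl
  | succ k ih =>
      have h : i + (k + 1) = (i + k) + 1 := rfl
      rw [h, succ_nsmul, add_comm (k • A 0), ← add_assoc, add_comm (A ((i + k) + 1)), L1, ih]

noncomputable def gZ : ℤ → roseCon.Quotient :=
  fun n => if 0 ≤ n then A (n + 1).toNat else (-n).toNat • A 0

noncomputable def g : WithZero ℤ → roseCon.Quotient :=
  fun w => if h : w = 0 then 0 else gZ (WithZero.unzero h)

lemma g_zero : g 0 = 0 := by simp [g]

lemma g_coe (n : ℤ) : g (n : ℤ) = gZ n := by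
  rw [g, dif_neg (WithZero.coe_ne_zero), WithZero.unzero_coe]

lemma step (a : ℕ) (w : WithZero ℤ) :
    A a + g w = g ((((a : ℤ) - 1 : ℤ) : WithZero ℤ) + w) := by
  refine WithZero.cases_on w ?_ fun m => ?_
  · rw [g_zero, add_zero, add_zero, g_coe, gZ]
    rcases Nat.eq_zero_or_pos a with rfl | ha
    · rw [if_neg (by omega)]
      norm_num
    · rw [if_pos (by omega)]
      congr 1
      omega
  · rw [← WithZero.coe_add, g_coe, g_coe]
    rcases le_or_gt 0 m with hm | hm
    · rw [gZ, if_pos hm]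
      have h1 : (m + 1).toNat = m.toNat + 1 := by omega
      rw [h1, add_comm (A a), L2]
      rcases Nat.eq_zero_or_pos (a + m.toNat) with h0 | h0
      · rw [gZ, if_neg (by omega)]
        have h2 : (-((a : ℤ) - 1 + m)).toNat = 1 := by omega
        rw [h2, one_smul]
        congr 1
        omega
      · rw [gZ, if_pos (by omega)]
        congr 1
        omega
    · rw [gZ, if_neg (by omega)]
      set k := (-m).toNat with hk
      have hk1 : 1 ≤ k := by omega
      rcases le_or_gt k a with hka | hka
      · have h3 : a = (a - k) + k := by omega
        have hL : A a + k • A 0 = A (a - k) := by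
          nth_rewrite 1 [h3]
          exact L3 k (a - k)
        rw [hL]
        rcases lt_or_eq_of_le hka with h | h
        · rw [gZ, if_pos (by omega)]
          congr 1
          omega
        · rw [gZ, if_neg (by omega)]
          have h4 : (-((a : ℤ) - 1 + m)).toNat = 1 := by omega
          rw [h4, one_smul]
          congr 1
          omega
      · have hsplit : k = a + (k - a) := by omega
        rw [hsplit, add_nsmul, ← add_assoc,
          show (A a : roseCon.Quotient) = A (0 + a) by rw [Nat.zero_add], L3,
          gZ, if_neg (by omega)]
        have h5 : (-((a : ℤ) - 1 + m)).toNat = (k - a) + 1 := by omega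
        rw [h5, succ_nsmul, add_comm]

lemma smulStep (n a : ℕ) (w : WithZero ℤ) :
    n • A a + g w = g (n • ((((a : ℤ) - 1 : ℤ) : WithZero ℤ)) + w) := by
  induction n with
  | zero => rw [zero_nsmul, zero_nsmul, zero_add, zero_add]
  | succ n ih =>
      rw [succ_nsmul, add_comm (n • A a), add_assoc, ih, step]
      congr 1
      rw [succ_nsmul, ← add_assoc, add_comm (n • _) (((((a : ℤ) - 1 : ℤ) : WithZero ℤ))), add_assoc]

lemma repr (p : ℕ →₀ ℕ) : (p : roseCon.Quotient) = g (φ p) := by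
  induction p using Finsupp.induction with
  | zero => simp [g_zero]
  | single_add a n f _ _ ih =>
      have key : ((Finsupp.single a n : ℕ →₀ ℕ) : roseCon.Quotient) = n • A a := by
        rw [show (Finsupp.single a n : ℕ →₀ ℕ) = n • Finsupp.single a 1 by
          rw [Finsupp.smul_single, smul_eq_mul, mul_one]]
        exact map_nsmul (AddCon.mk' roseCon) n _
      rw [map_add, φ_single, AddCon.coe_add, key, ih]
      exact smulStep n a (φ f)

lemma left_inv : Function.LeftInverse g ψ := by
  intro x
  induction x using AddCon.induction_on with
  | _ p => rw [ψ, AddCon.lift_coe, ← repr]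

lemma nsmul_coe (n : ℕ) (x : ℤ) :
    (n + 1) • ((x : ℤ) : WithZero ℤ) = ((((n : ℤ) + 1) * x : ℤ) : WithZero ℤ) := by
  induction n with
  | zero => simp
  | succ n ih =>
      rw [succ_nsmul, ih, ← WithZero.coe_add]
      congr 1
      push_cast
      ring

lemma right_inv : Function.RightInverse g ψ := by
  intro w
  refine WithZero.cases_on w ?_ fun m => ?_
  · rw [g_zero, map_zero]
  · rw [g_coe, gZ]
    rcases le_or_gt 0 m with hm | hm
    · rw [if_pos hm, ψ_A]
      congr 1
      omega
    · rw [if_neg (by omega)]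
      have h1 : (-m).toNat = ((-m).toNat - 1) + 1 := by omega
      rw [h1, map_nsmul, ψ_A, nsmul_coe]
      congr 1
      push_cast
      omega

end RoseAux

/-- M is isomorphic (as an additive monoid) to ℤ with one extra
identity element z adjoined (modelled by WithZero ℤ, where the adjoined 0 is z),
via a_{v_i} ↦ i − 1. -/
theorem rose_monoid_iso :
    ∃ e : roseCon.Quotient ≃+ WithZero ℤ,
      ∀ i : ℕ, e ((Finsupp.single i 1 : ℕ →₀ ℕ) : roseCon.Quotient)
        = (((i : ℤ) - 1 : ℤ) : WithZero ℤ) := by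
  refine ⟨AddEquiv.ofBijective RoseAux.ψ
    ⟨RoseAux.left_inv.injective, RoseAux.right_inv.surjective⟩, fun i => ?_⟩
  exact RoseAux.ψ_A i
end

section
/- Let M be a commutative monoid generated by two elements x₁, x₂ such that add(x₁) = add(x₂), and suppose x₁ = n·x₂ for some finite n ≥ 2 with all other relations derived from this one (i.e., M is the monoid presented by generators x₁, x₂ and the single relation x₁ = n·x₂). Then M is a refinement monoid. -/
/-- The single defining relation x₁ = n·x₂ on the free commutative monoid ℕ × ℕ
with x₁ := (1, 0) and x₂ := (0, 1). -/
def oneRel (n : ℕ) : (ℕ × ℕ) → (ℕ × ℕ) → Prop := fun p q =>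
  p = ((1, 0) : ℕ × ℕ) ∧ q = ((0, n) : ℕ × ℕ)

/-- The monoid presented by generators x₁, x₂ and the single relation x₁ = n·x₂. -/
def oneRelCon (n : ℕ) : AddCon (ℕ × ℕ) := addConGen (oneRel n)

/-- The weight homomorphism (a, b) ↦ n·a + b. -/
def weightHom (n : ℕ) : (ℕ × ℕ) →+ ℕ where
  toFun p := n * p.1 + p.2
  map_zero' := by simp
  map_add' p q := by simp [Prod.fst_add, Prod.snd_add]; ring

lemma oneRelCon_le_ker (n : ℕ) : oneRelCon n ≤ AddCon.ker (weightHom n) := by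
  apply AddCon.addConGen_le.mpr
  rintro p q ⟨rfl, rfl⟩
  show weightHom n (1, 0) = weightHom n (0, n)
  simp [weightHom]

lemma weight_eq_of_rel (n : ℕ) {p q : ℕ × ℕ} (h : oneRelCon n p q) :
    n * p.1 + p.2 = n * q.1 + q.2 :=
  oneRelCon_le_ker n h

/-- Normal form: every (a, b) is congruent to (0, n·a + b). -/
lemma norm_rel (n : ℕ) (a b : ℕ) : oneRelCon n (a, b) (0, n * a + b) := by
  induction a generalizing b with
  | zero => simpa using (oneRelCon n).refl (0, b)
  | succ a ih =>
      have h1 : oneRelCon n ((1, 0) : ℕ × ℕ) (0, n) :=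
        AddConGen.Rel.of _ _ ⟨rfl, rfl⟩
      have h2 : oneRelCon n (a, b) (a, b) := (oneRelCon n).refl _
      have h3 : oneRelCon n ((1, 0) + (a, b)) ((0, n) + (a, b)) :=
        (oneRelCon n).add h1 h2
      have h4 : oneRelCon n (a, n + b) (0, n * a + (n + b)) := ih (n + b)
      have e1 : ((1, 0) : ℕ × ℕ) + (a, b) = (a + 1, b) := by
        simp [Prod.ext_iff]; omega
      have e2 : ((0, n) : ℕ × ℕ) + (a, b) = (a, n + b) := by
        simp [Prod.ext_iff]
      rw [e1, e2] at h3
      have := (oneRelCon n).trans h3 h4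
      have e3 : n * a + (n + b) = n * (a + 1) + b := by ring
      rwa [e3] at this

/-- the monoid presented by generators x₁, x₂ and the single
relation x₁ = n·x₂ (n ≥ 2) is a refinement monoid. -/
theorem oneRel_refinement (n : ℕ) (hn : 2 ≤ n) :
    ∀ a b c d : (oneRelCon n).Quotient, a + b = c + d →
      ∃ e f g h : (oneRelCon n).Quotient,
        a = e + f ∧ b = g + h ∧ c = e + g ∧ d = f + h := by
  intro a b c d hABCD
  obtain ⟨pa, rfl⟩ := AddCon.mk'_surjective a
  obtain ⟨pb, rfl⟩ := AddCon.mk'_surjective b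
  obtain ⟨pc, rfl⟩ := AddCon.mk'_surjective c
  obtain ⟨pd, rfl⟩ := AddCon.mk'_surjective d
  -- weights
  set α := n * pa.1 + pa.2 with hα
  set β := n * pb.1 + pb.2 with hβ
  set γ := n * pc.1 + pc.2 with hγ
  set δ := n * pd.1 + pd.2 with hδ
  have hsum : α + β = γ + δ := by
    rw [← map_add, ← map_add] at hABCD
    have hrel : oneRelCon n (pa + pb) (pc + pd) := (AddCon.eq _).mp hABCD
    have := weight_eq_of_rel n hrel
    simp only [Prod.fst_add, Prod.snd_add, Nat.mul_add] at this
    simp only [hα, hβ, hγ, hδ]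
    omega
  -- refinement in ℕ
  obtain ⟨e', f', g', h', he, hb', hc', hd'⟩ :
      ∃ e' f' g' h' : ℕ, α = e' + f' ∧ β = g' + h' ∧ γ = e' + g' ∧ δ = f' + h' := by
    refine ⟨min α γ, α - min α γ, γ - min α γ, β - (γ - min α γ), ?_, ?_, ?_, ?_⟩ <;> omega
  -- normal forms in the quotient
  have key : ∀ p : ℕ × ℕ, ((oneRelCon n).mk' p : (oneRelCon n).Quotient)
      = (oneRelCon n).mk' (0, n * p.1 + p.2) := fun p =>
    (AddCon.eq _).mpr (norm_rel n p.1 p.2)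
  refine ⟨(oneRelCon n).mk' (0, e'), (oneRelCon n).mk' (0, f'),
          (oneRelCon n).mk' (0, g'), (oneRelCon n).mk' (0, h'), ?_, ?_, ?_, ?_⟩
  · rw [key pa, ← map_add]
    congr 1
    simp [Prod.ext_iff, ← hα, he]
  · rw [key pb, ← map_add]
    congr 1
    simp [Prod.ext_iff, ← hβ, hb']
  · rw [key pc, ← map_add]
    congr 1
    simp [Prod.ext_iff, ← hγ, hc']
  · rw [key pd, ← map_add]
    congr 1
    simp [Prod.ext_iff, ← hδ, hd']
end

section
/- Every separative commutative monoid M generated by two elements x and y, in which any two elements a, b of the submonoid generated by x and y satisfy a ≤ b or b ≤ a (where u ≤ w means w = u + z for some z), is a refinement monoid. -/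
def HasRefinement {M : Type*} [AddCommMonoid M] (a b c d : M) : Prop :=
  ∃ e f g h : M, a = e + f ∧ b = g + h ∧ c = e + g ∧ d = f + h

namespace HasRefinement

variable {M : Type*} [AddCommMonoid M] {a b c d : M}

theorem symm (h : HasRefinement a b c d) : HasRefinement c d a b :=
  let ⟨e, f, g, h, ha, hb, hc, hd⟩ := h
  ⟨e, g, f, h, hc, hd, ha, hb⟩

theorem swap_left (h : HasRefinement a b c d) : HasRefinement b a c d :=
  let ⟨e, f, g, h, ha, hb, hc, hd⟩ := h
  ⟨g, h, e, f, hb, ha, by rw [hc, add_comm], by rw [hd, add_comm]⟩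

theorem swap_right (h : HasRefinement a b c d) : HasRefinement a b d c :=
  h.symm.swap_left.symm

end HasRefinement

theorem left_mem_addCl_add {M : Type*} [AddCommMonoid M] (a u : M) : a ∈ addCl (a + u) :=
  ⟨u, 1, le_rfl, (one_nsmul _).symm⟩

theorem hasRefinement_of_forall_le {M : Type*} [AddCommMonoid M]
    (hsep : ∀ a b c : M, a + c = b + c → c ∈ addCl a → c ∈ addCl b → a = b)
    {a b c d : M} (hb : ∃ z, b = a + z) (hc : ∃ z, c = a + z) (hd : ∃ z, d = a + z)
    (habcd : a + b = c + d) : HasRefinement a b c d := by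
  obtain ⟨w, rfl⟩ := hb
  obtain ⟨s, rfl⟩ := hc
  obtain ⟨t, rfl⟩ := hd
  have hcancel : a + w = a + s + t :=
    hsep _ _ a (by rw [add_comm, habcd]; abel) (left_mem_addCl_add a w)
      (by rw [add_assoc]; exact left_mem_addCl_add a (s + t))
  exact ⟨a, 0, s, a + t, (add_zero a).symm, by rw [hcancel]; abel, rfl, (zero_add _).symm⟩

theorem separative_total_refinement_general {M : Type*} [AddCommMonoid M]
    (hsep : ∀ a b c : M, a + c = b + c → c ∈ addCl a → c ∈ addCl b → a = b)
    (htot : ∀ a b : M, (∃ z : M, b = a + z) ∨ (∃ z : M, a = b + z)) :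
    ∀ a b c d : M, a + b = c + d →
      ∃ e f g h : M, a = e + f ∧ b = g + h ∧ c = e + g ∧ d = f + h := by
  intro a b c d habcd
  change HasRefinement a b c d
  wlog hab : ∃ z, b = a + z generalizing a b
  · exact (this b a (by rw [add_comm, habcd]) ((htot a b).resolve_left hab)).swap_left
  wlog hcd : ∃ z, d = c + z generalizing c d
  · exact (this d c (by rw [habcd, add_comm]) ((htot c d).resolve_left hcd)).swap_right
  wlog hac : ∃ z, c = a + z generalizing a b c d
  · exact (this c d hcd a b habcd.symm hab ((htot a c).resolve_left hac)).symm
  obtain ⟨u, hu⟩ := hac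
  obtain ⟨v, hv⟩ := hcd
  exact hasRefinement_of_forall_le hsep hab ⟨u, hu⟩ ⟨u + v, by rw [hv, hu, add_assoc]⟩ habcd

/-- a separative commutative monoid generated by two elements in
which any two elements are comparable (a ≤ b or b ≤ a) is a refinement monoid. -/
theorem separative_total_refinement {M : Type*} [AddCommMonoid M]
    (hsep : ∀ a b c : M, a + c = b + c → c ∈ addCl a → c ∈ addCl b → a = b)
    (x y : M) (hgen : ∀ m : M, ∃ a b : ℕ, m = a • x + b • y)
    (htot : ∀ a b : M, (∃ z : M, b = a + z) ∨ (∃ z : M, a = b + z)) :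
    ∀ a b c d : M, a + b = c + d →
      ∃ e f g h : M, a = e + f ∧ b = g + h ∧ c = e + g ∧ d = f + h :=
  separative_total_refinement_general hsep htot
end

section
/- Let H be an ℵ₀-monoid generated by two elements x₁, x₂ (every element equals α·x₁ + β·x₂ for some cardinals 0 ≤ α, β ≤ ℵ₀). Suppose add(x₁) = add(x₂). Then for any nonzero element y = α·x₁ + β·x₂ of H (with α + β ≥ 1), one has ℵ₀·y = ℵ₀·x₁. -/
/-!
If `y + z = n·x` and `x + w = m·y` with `n, m ≥ 1`, i.e. `y ∈ add(x)` and `x ∈ add(y)`, multiplying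
by `ℵ₀` and using `ℵ₀·(n·x) = ℵ₀x` gives `ℵ₀x = ℵ₀y + ℵ₀z` and `ℵ₀y = ℵ₀x + ℵ₀w`; since `ℵ₀z` is
idempotent, these force `ℵ₀x = ℵ₀y`. Each `xᵢ` lies in its own `add(xᵢ)`, so `add(x₁) = add(x₂)`
gives `ℵ₀x₁ = ℵ₀x₂`, and `ℵ₀(α·x₁ + β·x₂)` is a nonempty sum of copies of this idempotent.
The monoid laws and the identities for `ℵ₀` all come from (A2) by reindexing double sums along
explicit bijections of `ℕ × ℕ`.
-/

theorem eq_of_eq_add_of_eq_add {α : Type*} [AddCommMonoid α] {a b c d : α} (hc : c + c = c)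
    (ha : a = b + c) (hb : b = a + d) : a = b := by
  have hb' : b = b + c + d := ha ▸ hb
  calc a = b + c := ha
    _ = b + c + d + c := by rw [← hb']
    _ = b + c + d := by rw [add_right_comm (b + c) d c, add_assoc b c c, hc]
    _ = b := hb'.symm

namespace AlephMonoid

variable {H : Type*} (M : AlephMonoid H)

theorem sum_comp_equiv_s15 (f : ℕ → H) (σ : ℕ ≃ ℕ) : M.sum (f ∘ σ) = M.sum f := by
  have h₁ := M.a2 (f ∘ Nat.pairEquiv) Nat.pairEquiv
  have h₂ := M.a2 (f ∘ Nat.pairEquiv) (Nat.pairEquiv.trans σ.symm)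
  simp only [Function.comp_def, Equiv.apply_symm_apply, Equiv.symm_trans_apply,
    Equiv.symm_symm] at h₁ h₂
  rw [Function.comp_def, ← h₂, h₁]

theorem sum_sum_eq_of_equiv (x y : ℕ × ℕ → H) (ρ : ℕ × ℕ ≃ ℕ × ℕ) (h : ∀ p, x p = y (ρ p)) :
    M.sum (fun i => M.sum fun j => x (i, j)) = M.sum (fun i => M.sum fun j => y (i, j)) := by
  rw [M.a2 x Nat.pairEquiv, M.a2 y (ρ.symm.trans Nat.pairEquiv)]
  congr 1
  funext k
  simpa using h (Nat.pairEquiv.symm k)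

theorem sum_eq_add (f : ℕ → H) (hf : ∀ i, 2 ≤ i → f i = M.zero) :
    M.sum f = M.add (f 0) (f 1) := by
  unfold add
  congr 1
  funext i
  rcases i with _ | _ | i <;> simp [hf]

theorem zero_add (a : H) : M.add M.zero a = a := by rw [add_comm, add_zero]

theorem sum_sum_eq_add_add (x : ℕ × ℕ → H) (hx : ∀ i j, 2 ≤ i ∨ 2 ≤ j → x (i, j) = M.zero) :
    M.sum (fun i => M.sum fun j => x (i, j)) =
      M.add (M.add (x (0, 0)) (x (0, 1))) (M.add (x (1, 0)) (x (1, 1))) := by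
  have hrow : ∀ i, M.sum (fun j => x (i, j)) = M.add (x (i, 0)) (x (i, 1)) := fun i =>
    M.sum_eq_add _ fun j hj => hx i j (Or.inr hj)
  simp only [hrow]
  rw [M.sum_eq_add]
  intro i hi
  rw [hx i 0 (Or.inl hi), hx i 1 (Or.inl hi), add_zero]

abbrev toAddCommMonoid : AddCommMonoid H where
  add := M.add
  zero := M.zero
  add_assoc := M.add_assoc
  zero_add := M.zero_add
  add_zero := M.add_zero
  add_comm := M.add_comm
  nsmul := M.nsmul
  nsmul_zero _ := rfl
  nsmul_succ _ _ := M.add_comm _ _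

theorem infMul_zero : M.infMul M.zero = M.zero := M.a1 _ fun _ _ => rfl

theorem infMul_add (a b : H) : M.infMul (M.add a b) = M.add (M.infMul a) (M.infMul b) := by
  let x : ℕ × ℕ → H := fun p => if p.2 = 0 then a else if p.2 = 1 then b else M.zero
  refine (M.sum_sum_eq_of_equiv x (x ∘ Prod.swap) (Equiv.prodComm ℕ ℕ) fun _ => rfl).trans
    (M.sum_eq_add _ fun i hi => ?_)
  have hi₀ : i ≠ 0 := by omega
  have hi₁ : i ≠ 1 := by omega
  simp only [x, Function.comp_apply, Prod.swap_prod_mk, hi₀, hi₁, if_false]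
  exact M.infMul_zero

theorem infMul_infMul (a : H) : M.infMul (M.infMul a) = M.infMul a :=
  M.a2 (fun _ => a) Nat.pairEquiv

def firstColumnToTwoRows : ℕ × ℕ ≃ ℕ × ℕ where
  toFun p := if p.2 = 0 then (p.1 % 2, p.1 / 2) else (p.2 + 1, p.1)
  invFun p := if p.1 = 0 then (2 * p.2, 0) else if p.1 = 1 then (2 * p.2 + 1, 0) else (p.2, p.1 - 1)
  left_inv := by
    rintro ⟨i, j⟩
    dsimp only
    split_ifs <;> simp_all [Prod.ext_iff] <;> omega
  right_inv := by
    rintro ⟨i, j⟩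
    dsimp only
    split_ifs <;> simp_all [Prod.ext_iff] <;> omega

theorem add_infMul_self (a : H) : M.add (M.infMul a) (M.infMul a) = M.infMul a := by
  let x : ℕ × ℕ → H := fun p => if p.2 = 0 then a else M.zero
  let y : ℕ × ℕ → H := fun p => if p.1 ≤ 1 then a else M.zero
  have hxy : ∀ p, x p = y (firstColumnToTwoRows p) := by
    rintro ⟨i, j⟩
    simp only [x, y, firstColumnToTwoRows, Equiv.coe_fn_mk]
    split_ifs <;> simp_all; omega
  have key := M.sum_sum_eq_of_equiv x y _ hxy
  rw [M.sum_eq_add (fun i => M.sum fun j => y (i, j)) fun i hi => by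
    simp only [y, show ¬i ≤ 1 by omega, if_false]
    exact M.infMul_zero] at key
  have hrow : ∀ i, M.sum (fun j => x (i, j)) = a := fun i => M.a1 _ fun j hj => by simp [x, hj]
  simp only [hrow, y, zero_le, le_refl, if_true] at key
  exact key.symm

theorem infMul_nsmul (a : H) {n : ℕ} (hn : n ≠ 0) : M.infMul (M.nsmul n a) = M.infMul a := by
  induction n, Nat.one_le_iff_ne_zero.2 hn using Nat.le_induction with
  | base => rw [nsmul, nsmul, add_zero]
  | succ n hn ih => rw [nsmul, infMul_add, ih (by omega), add_infMul_self]

theorem infMul_cmul (a : H) {γ : Option ℕ} (hγ : γ ≠ some 0) :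
    M.infMul (M.cmul γ a) = M.infMul a := by
  cases γ with
  | none => exact M.infMul_infMul a
  | some n => exact M.infMul_nsmul a fun hn => hγ (hn ▸ rfl)

theorem inAdd_self (x : H) : M.inAdd x x := ⟨M.zero, 1, le_rfl, rfl⟩

theorem exists_infMul_eq_add_of_inAdd {x y : H} (h : M.inAdd x y) :
    ∃ z, M.infMul x = M.add (M.infMul y) (M.infMul z) := by
  obtain ⟨z, n, hn, hyz⟩ := h
  exact ⟨z, by rw [← M.infMul_nsmul x (by omega : n ≠ 0), ← hyz, infMul_add]⟩

theorem infMul_eq_of_inAdd_of_inAdd {x y : H} (hxy : M.inAdd x y) (hyx : M.inAdd y x) :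
    M.infMul x = M.infMul y := by
  obtain ⟨z, hz⟩ := M.exists_infMul_eq_add_of_inAdd hxy
  obtain ⟨w, hw⟩ := M.exists_infMul_eq_add_of_inAdd hyx
  let := M.toAddCommMonoid
  exact eq_of_eq_add_of_eq_add (M.add_infMul_self z) hz hw

end AlephMonoid

theorem infMul_eq_of_add_eq_general {H : Type*} (M : AlephMonoid H) (x₁ x₂ : H)
    (haddeq : ∀ w : H, M.inAdd x₁ w ↔ M.inAdd x₂ w)
    (α β : Option ℕ) (hne : ¬(α = some 0 ∧ β = some 0)) :
    M.infMul (M.add (M.cmul α x₁) (M.cmul β x₂)) = M.infMul x₁ := by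
  have h₁₂ : M.infMul x₁ = M.infMul x₂ := M.infMul_eq_of_inAdd_of_inAdd
    ((haddeq x₂).2 (M.inAdd_self x₂)) ((haddeq x₁).1 (M.inAdd_self x₁))
  rw [M.infMul_add]
  by_cases hα : α = some 0
  · have hβ : β ≠ some 0 := fun hβ => hne ⟨hα, hβ⟩
    subst hα
    rw [AlephMonoid.cmul, AlephMonoid.nsmul, M.infMul_zero, M.zero_add, M.infMul_cmul x₂ hβ, h₁₂]
  · rw [M.infMul_cmul x₁ hα]
    by_cases hβ : β = some 0
    · subst hβ
      rw [AlephMonoid.cmul, AlephMonoid.nsmul, M.infMul_zero, M.add_zero]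
    · rw [M.infMul_cmul x₂ hβ, ← h₁₂, M.add_infMul_self]

/-- in a two-generated ℵ₀-monoid with add(x₁) = add(x₂), every nonzero
element y = α·x₁ + β·x₂ satisfies ℵ₀·y = ℵ₀·x₁. (none stands for ℵ₀.) -/
theorem infMul_eq_of_add_eq {H : Type*} (M : AlephMonoid H) (x₁ x₂ : H)
    (hgen : ∀ h : H, ∃ α β : Option ℕ, h = M.add (M.cmul α x₁) (M.cmul β x₂))
    (haddeq : ∀ w : H, M.inAdd x₁ w ↔ M.inAdd x₂ w)
    (α β : Option ℕ) (hne : ¬(α = some 0 ∧ β = some 0)) :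
    M.infMul (M.add (M.cmul α x₁) (M.cmul β x₂)) = M.infMul x₁ :=
  infMul_eq_of_add_eq_general M x₁ x₂ haddeq α β hne
end
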